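/- arXiv:1710.08553 — 2 statements merged into one kernel-verified Lean document; each statement's English description precedes it below -/
import Mathlib

section
/- If θ* is the entropic estimator of a parameter θ (the minimizer of the posterior expected relative entropy loss), and g is a bijection, then g(θ*) is the entropic estimator of β = g(θ): the risk function for β evaluated at g(θ) equals the risk function for θ evaluated at θ, hence their minimizers correspond under g. -/
open MeasureTheory

/-- Invariance of the entropic estimator under bijective reparametrization: the risk
of the reparametrized model at `g θ` equals the risk of the original model at `θ`,
so if `θ*` minimizes the original risk then `g θ*` minimizes the new risk. -/
theorem entropic_estimator_invariance
    {Θ B Y : Type*} [MeasurableSpace Θ] [MeasurableSpace B] [MeasurableSpace Y]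
    (g : Θ ≃ᵐ B) (π : Measure Θ) [IsProbabilityMeasure π]
    (f : Θ → Y → ℝ) (samp : Θ → Measure Y)
    (L : Θ → Θ → ℝ)
    (hL : ∀ θ0 θ, L θ0 θ = ∫ y, Real.log (f θ0 y / f θ y) ∂(samp θ0))
    (R : Θ → ℝ) (hR : ∀ θ, R θ = ∫ θ0, L θ0 θ ∂π)
    (ftil : B → Y → ℝ) (hftil : ∀ β, ftil β = f (g.symm β))
    (Ltil : B → B → ℝ)
    (hLtil : ∀ β0 β, Ltil β0 β =
      ∫ y, Real.log (ftil β0 y / ftil β y) ∂(samp (g.symm β0)))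
    (Rtil : B → ℝ) (hRtil : ∀ β, Rtil β = ∫ β0, Ltil β0 β ∂(π.map g))
    (θstar : Θ) (hmin : ∀ θ, R θstar ≤ R θ) :
    (∀ θ, Rtil (g θ) = R θ) ∧ (∀ β, Rtil (g θstar) ≤ Rtil β) := by
  have key : ∀ θ, Rtil (g θ) = R θ := by
    intro θ
    rw [hRtil, hR, MeasureTheory.integral_map_equiv]
    congr 1
    funext θ0
    rw [hLtil, hL, g.symm_apply_apply, hftil, hftil, g.symm_apply_apply,
      g.symm_apply_apply]
  refine ⟨key, fun β => ?_⟩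
  have : Rtil β = R (g.symm β) := by
    rw [← key (g.symm β), g.apply_symm_apply]
  rw [this, key]
  exact hmin _
end

section
/- Let f(y|μ,φ) = c(y,φ)exp(−D(y,μ)/(2φ)) be the density of a GLM sample in mean-value parametrization, with D(y,μ) = D₁(y) + D₂(y,μ) and E[D₂(Y,μ)] = D₂(E[Y],μ). Then for fixed φ, the entropic risk R(β,φ) = E[log(f(Y|μ₀,φ₀)/f(Y|μ,φ))] with μ = G⁻¹(Xβ) differs from (1/(2φ))D₂(E[Y], G⁻¹(Xβ)) by a quantity not depending on β; hence argmin_β R(β,φ) = argmin_β D₂(E[Y], G⁻¹(Xβ)). -/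
open MeasureTheory

/-!
Taking logarithms,
`log (f₀ / f(Y|μ,φ)) = log f₀ - log c(Y,φ) + (D₁(Y) + D₂(Y,μ)) / (2φ)`,
and the only term depending on `μ = G⁻¹(Xβ)` is `D₂(Y,μ) / (2φ)`, whose expectation
is `D₂(E[Y],μ) / (2φ)`. Since `1/(2φ) > 0`, the risk is an increasing affine function of
`D₂(E[Y], G⁻¹(Xβ))`, so both have the same minimizers.
-/

lemma Real.log_div_mul_exp {a c : ℝ} (ha : a ≠ 0) (hc : c ≠ 0) (t : ℝ) :
    Real.log (a / (c * Real.exp t)) = Real.log a - Real.log c - t := by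
  rw [Real.log_div ha (mul_ne_zero hc (Real.exp_ne_zero t)),
    Real.log_mul hc (Real.exp_ne_zero t), Real.log_exp]
  ring

lemma MeasureTheory.integral_log_div_mul_exp {α : Type*} [MeasurableSpace α] {P : Measure α}
    {a c t : α → ℝ} (ha : ∀ ω, a ω ≠ 0) (hc : ∀ ω, c ω ≠ 0)
    (hia : Integrable (fun ω => Real.log (a ω)) P)
    (hic : Integrable (fun ω => Real.log (c ω)) P)
    (hit : Integrable t P) :
    ∫ ω, Real.log (a ω / (c ω * Real.exp (t ω))) ∂P
      = ∫ ω, Real.log (a ω) ∂P - ∫ ω, Real.log (c ω) ∂P - ∫ ω, t ω ∂P := by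
  simp_rw [Real.log_div_mul_exp (ha _) (hc _)]
  rw [integral_sub (f := fun ω => Real.log (a ω) - Real.log (c ω)) (hia.sub hic) hit,
    integral_sub hia hic]

theorem glm_entropic_risk_reduction_general
    {α : Type*} [MeasurableSpace α] (P : Measure α)
    (m p : ℕ)
    (C : (Fin m → ℝ) → ℝ → ℝ)
    (D D2 : (Fin m → ℝ) → (Fin m → ℝ) → ℝ) (D1 : (Fin m → ℝ) → ℝ)
    (hdec : ∀ y μ, D y μ = D1 y + D2 y μ)
    (f : (Fin m → ℝ) → (Fin m → ℝ) → ℝ → ℝ)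
    (hf : ∀ y μ φ', f y μ φ' = C y φ' * Real.exp (-(D y μ) / (2 * φ')))
    (Yv : α → Fin m → ℝ) (μ0 : α → Fin m → ℝ) (φ0 : α → ℝ)
    (φ : ℝ) (hφ : 0 < φ)
    (hCpos : ∀ y φ', 0 < C y φ')
    (EY : Fin m → ℝ)
    (haff : ∀ μ, ∫ ω, D2 (Yv ω) μ ∂P = D2 EY μ)
    (hint0 : Integrable (fun ω => Real.log (f (Yv ω) (μ0 ω) (φ0 ω))) P)
    (hintC : Integrable (fun ω => Real.log (C (Yv ω) φ)) P)
    (hintD1 : Integrable (fun ω => D1 (Yv ω)) P)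
    (hintD2 : ∀ μ, Integrable (fun ω => D2 (Yv ω) μ) P)
    (Ginv : (Fin m → ℝ) → Fin m → ℝ) (X : Matrix (Fin m) (Fin (p + 1)) ℝ)
    (R : (Fin (p + 1) → ℝ) → ℝ)
    (hR : ∀ β, R β = ∫ ω, Real.log
        (f (Yv ω) (μ0 ω) (φ0 ω) / f (Yv ω) (Ginv (X.mulVec β)) φ) ∂P) :
    ∃ K : ℝ,
      (∀ β, R β = K + (1 / (2 * φ)) * D2 EY (Ginv (X.mulVec β))) ∧
      (∀ β β', R β ≤ R β' ↔
        D2 EY (Ginv (X.mulVec β)) ≤ D2 EY (Ginv (X.mulVec β'))) := by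
  have hf_ne : ∀ y μ φ', f y μ φ' ≠ 0 := fun y μ φ' => by
    rw [hf]; exact (mul_pos (hCpos y φ') (Real.exp_pos _)).ne'
  have hR_affine : ∀ β, R β = (∫ ω, Real.log (f (Yv ω) (μ0 ω) (φ0 ω)) ∂P
      - ∫ ω, Real.log (C (Yv ω) φ) ∂P + (1 / (2 * φ)) * ∫ ω, D1 (Yv ω) ∂P)
      + (1 / (2 * φ)) * D2 EY (Ginv (X.mulVec β)) := by
    intro β
    rw [hR]
    set μ := Ginv (X.mulVec β)
    simp_rw [hf _ μ φ, hdec]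
    have hint_exp : Integrable (fun ω => -(D1 (Yv ω) + D2 (Yv ω) μ) / (2 * φ)) P :=
      (hintD1.add (hintD2 μ)).neg.div_const _
    rw [integral_log_div_mul_exp (fun _ => hf_ne _ _ _) (fun _ => (hCpos _ _).ne')
        hint0 hintC hint_exp,
      integral_div, integral_neg, integral_add hintD1 (hintD2 _), haff]
    ring
  refine ⟨_, hR_affine, fun β β' => ?_⟩
  rw [hR_affine β, hR_affine β', add_le_add_iff_left, mul_le_mul_iff_right₀ (by positivity)]

/-- For fixed `φ`, the entropic risk `R(β,φ)` of a GLM differs from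
`(1/(2φ)) D₂(E[Y], G⁻¹(Xβ))` by a constant not depending on `β`; hence minimizing
`R(·,φ)` is equivalent to minimizing `D₂(E[Y], G⁻¹(X·))`. -/
theorem glm_entropic_risk_reduction
    {α : Type*} [MeasurableSpace α] (P : Measure α) [IsProbabilityMeasure P]
    (m p : ℕ)
    (C : (Fin m → ℝ) → ℝ → ℝ)
    (D D2 : (Fin m → ℝ) → (Fin m → ℝ) → ℝ) (D1 : (Fin m → ℝ) → ℝ)
    (hdec : ∀ y μ, D y μ = D1 y + D2 y μ)
    (f : (Fin m → ℝ) → (Fin m → ℝ) → ℝ → ℝ)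
    (hf : ∀ y μ φ', f y μ φ' = C y φ' * Real.exp (-(D y μ) / (2 * φ')))
    (Yv : α → Fin m → ℝ) (μ0 : α → Fin m → ℝ) (φ0 : α → ℝ)
    (φ : ℝ) (hφ : 0 < φ)
    (hCpos : ∀ y φ', 0 < C y φ')
    (hfpos : ∀ ω, 0 < f (Yv ω) (μ0 ω) (φ0 ω))
    (EY : Fin m → ℝ) (hEY : ∀ i, EY i = ∫ ω, Yv ω i ∂P)
    (haff : ∀ μ, ∫ ω, D2 (Yv ω) μ ∂P = D2 EY μ)
    (hint0 : Integrable (fun ω => Real.log (f (Yv ω) (μ0 ω) (φ0 ω))) P)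
    (hintC : Integrable (fun ω => Real.log (C (Yv ω) φ)) P)
    (hintD1 : Integrable (fun ω => D1 (Yv ω)) P)
    (hintD2 : ∀ μ, Integrable (fun ω => D2 (Yv ω) μ) P)
    (Ginv : (Fin m → ℝ) → Fin m → ℝ) (X : Matrix (Fin m) (Fin (p + 1)) ℝ)
    (R : (Fin (p + 1) → ℝ) → ℝ)
    (hR : ∀ β, R β = ∫ ω, Real.log
        (f (Yv ω) (μ0 ω) (φ0 ω) / f (Yv ω) (Ginv (X.mulVec β)) φ) ∂P) :
    ∃ K : ℝ,
      (∀ β, R β = K + (1 / (2 * φ)) * D2 EY (Ginv (X.mulVec β))) ∧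
      (∀ β β', R β ≤ R β' ↔
        D2 EY (Ginv (X.mulVec β)) ≤ D2 EY (Ginv (X.mulVec β'))) :=
  glm_entropic_risk_reduction_general P m p C D D2 D1 hdec f hf Yv μ0 φ0 φ hφ hCpos EY haff hint0
    hintC hintD1 hintD2 Ginv X R hR
end
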